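/- arXiv:1412.8242 — 6 statements merged into one kernel-verified Lean document; each statement's English description precedes it below -/
import Mathlib

section
/- Let X be a metric space, f : X → X a map, U ⊆ X a subset and z₀ ∈ X a point such that: z₀ belongs to the closure of U; U ⊆ f(U); and dist(f(z), z₀) ≥ dist(z, z₀) for every z in the closure of U. Then for every r > 0 the set U_r = U ∩ {z : dist(z, z₀) < r} satisfies: U_r is nonempty; z₀ belongs to the closure of U_r; U_r ⊆ f(U_r); and dist(f(z), z₀) ≥ dist(z, z₀) for every z in the closure of U_r. -/
open Metric

lemma subset_image_inter_setOf_lt {α β : Type*} [Preorder β] {f : α → α} {s : Set α}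
    (φ : α → β) (hs : s ⊆ f '' s) (hφ : ∀ z ∈ s, φ z ≤ φ (f z)) (r : β) :
    s ∩ {z | φ z < r} ⊆ f '' (s ∩ {z | φ z < r}) := by
  rintro y ⟨hy, hyr⟩
  obtain ⟨x, hx, rfl⟩ := hs hy
  exact ⟨x, ⟨hx, (hφ x hx).trans_lt hyr⟩, rfl⟩

lemma mem_closure_inter_ball {X : Type*} [PseudoMetricSpace X] {s : Set X} {x : X}
    (hx : x ∈ closure s) {r : ℝ} (hr : 0 < r) : x ∈ closure (s ∩ ball x r) := by
  rw [Set.inter_comm]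
  exact isOpen_ball.inter_closure ⟨mem_ball_self hr, hx⟩

/-- Condition (*) of the paper can be localized: if `z₀ ∈ closure U`, `U ⊆ f(U)` and
`dist (f z) z₀ ≥ dist z z₀` for all `z ∈ closure U`, then for every `r > 0` the set
`U_r = U ∩ {z | dist z z₀ < r}` satisfies the same conditions and is nonempty. -/
theorem star_condition_localizes {X : Type*} [MetricSpace X] (f : X → X) (U : Set X) (z₀ : X)
    (hcl : z₀ ∈ closure U) (hUf : U ⊆ f '' U)
    (hdist : ∀ z ∈ closure U, dist (f z) z₀ ≥ dist z z₀) :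
    ∀ r > (0 : ℝ),
      (U ∩ {z | dist z z₀ < r}).Nonempty ∧
      z₀ ∈ closure (U ∩ {z | dist z z₀ < r}) ∧
      (U ∩ {z | dist z z₀ < r}) ⊆ f '' (U ∩ {z | dist z z₀ < r}) ∧
      ∀ z ∈ closure (U ∩ {z | dist z z₀ < r}), dist (f z) z₀ ≥ dist z z₀ := by
  intro r hr
  have hz₀ : z₀ ∈ closure (U ∩ ball z₀ r) := mem_closure_inter_ball hcl hr
  exact ⟨closure_nonempty_iff.mp ⟨z₀, hz₀⟩, hz₀,
    subset_image_inter_setOf_lt (dist · z₀) hUf (fun z hz ↦ hdist z (subset_closure hz)) r,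
    fun z hz ↦ hdist z (closure_mono Set.inter_subset_left hz)⟩
end

section
/- Let f : ℝ → ℝ be a strictly increasing homeomorphism of the real line possessing at least one fixed point. Then there exist a point z₀ ∈ ℝ with f(z₀) = z₀, a nonempty open set U ⊆ ℝ, and a map g equal to either f or f⁻¹, such that: z₀ belongs to the closure of U; U ⊆ g(U); and |g(z) − z₀| ≥ |z − z₀| for every z in the closure of U. -/
/-!
Let `a` be a fixed point of `f` and `y > a` such that `f - id` has a constant sign on `[a, y]`;
such a pair exists because either `f` fixes everything to the right of a fixed point `x₀`, or one
takes for `a` the last fixed point before a non-fixed `y > x₀` and applies the intermediate value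
theorem on `(a, y]`. Replacing `f` by `f⁻¹` if necessary, `z ≤ g z` on `[a, y]`; then `g` pushes
points of `[a, y]` away from `a` and maps `(a, y)` onto an interval containing it.
-/

open Set

def SatisfiesStar (g : ℝ → ℝ) (U : Set ℝ) (z₀ : ℝ) : Prop :=
  z₀ ∈ closure U ∧ U ⊆ g '' U ∧ ∀ z ∈ closure U, |g z - z₀| ≥ |z - z₀|

theorem IsPreconnected.forall_pos_or_forall_neg {X α : Type*} [TopologicalSpace X]
    [LinearOrder α] [TopologicalSpace α] [OrderClosedTopology α] [Zero α] {s : Set X}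
    (hs : IsPreconnected s) {φ : X → α} (hφ : ContinuousOn φ s) (hne : ∀ x ∈ s, φ x ≠ 0) :
    (∀ x ∈ s, 0 < φ x) ∨ ∀ x ∈ s, φ x < 0 := by
  by_contra! h
  obtain ⟨⟨x, hx, hx0⟩, y, hy, hy0⟩ := h
  obtain ⟨z, hz, hz0⟩ := hs.intermediate_value hx hy hφ ⟨hx0, hy0⟩
  exact hne z hz hz0

theorem exists_lt_eq_zero_forall_Ioc_ne_zero {φ : ℝ → ℝ} {x₀ y : ℝ}
    (hφ : ContinuousOn φ (Icc x₀ y)) (hxy : x₀ ≤ y) (h0 : φ x₀ = 0) (hy : φ y ≠ 0) :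
    ∃ a < y, φ a = 0 ∧ ∀ z ∈ Ioc a y, φ z ≠ 0 := by
  set Z := Icc x₀ y ∩ φ ⁻¹' {0}
  have hZ : IsCompact Z := isCompact_Icc.of_isClosed_subset
    (hφ.preimage_isClosed_of_isClosed isClosed_Icc isClosed_singleton) inter_subset_left
  obtain ⟨a, ⟨⟨hxa, hay⟩, ha⟩, hmax⟩ := hZ.exists_isGreatest ⟨x₀, ⟨le_rfl, hxy⟩, h0⟩
  refine ⟨a, hay.lt_of_ne (by rintro rfl; exact hy ha), ha, fun z hz hz0 => ?_⟩
  exact (hmax ⟨⟨hxa.trans hz.1.le, hz.2⟩, hz0⟩).not_gt hz.1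

theorem exists_eq_zero_and_nonneg_or_nonpos_on_Icc {φ : ℝ → ℝ} (hφ : Continuous φ) {x₀ : ℝ}
    (h0 : φ x₀ = 0) :
    ∃ a y, a < y ∧ φ a = 0 ∧ ((∀ z ∈ Icc a y, 0 ≤ φ z) ∨ ∀ z ∈ Icc a y, φ z ≤ 0) := by
  by_cases hzero : ∀ y, x₀ < y → φ y = 0
  · have hIcc : ∀ z ∈ Icc x₀ (x₀ + 1), φ z = 0 := fun z hz =>
      hz.1.eq_or_lt.elim (fun h => h ▸ h0) (hzero z)
    exact ⟨x₀, x₀ + 1, lt_add_one x₀, h0, Or.inl fun z hz => (hIcc z hz).ge⟩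
  push Not at hzero
  obtain ⟨y, hxy, hy⟩ := hzero
  obtain ⟨a, hay, ha, hne⟩ :=
    exists_lt_eq_zero_forall_Ioc_ne_zero hφ.continuousOn hxy.le h0 hy
  refine ⟨a, y, hay, ha, ?_⟩
  rw [← Ioc_insert_left hay.le]
  simp only [forall_mem_insert, ha, le_refl, true_and]
  exact (isPreconnected_Ioc.forall_pos_or_forall_neg hφ.continuousOn hne).imp
    (fun hpos z hz => (hpos z hz).le) (fun hneg z hz => (hneg z hz).le)

theorem Ioo_subset_image_Ioo {α : Type*} [LinearOrder α] {g : α → α} (hg : Monotone g)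
    (hsurj : Function.Surjective g) {a y : α} (ha : g a = a) (hy : y ≤ g y) :
    Ioo a y ⊆ g '' Ioo a y := by
  rintro z ⟨haz, hzy⟩
  obtain ⟨w, rfl⟩ := hsurj z
  refine ⟨w, ⟨?_, ?_⟩, rfl⟩
  · exact lt_of_not_ge fun hwa => (hg hwa).trans_eq ha |>.not_gt haz
  · exact lt_of_not_ge fun hyw => (hy.trans (hg hyw)).not_gt hzy

theorem satisfiesStar_Ioo {g : ℝ → ℝ} (hg : Monotone g) (hsurj : Function.Surjective g)
    {a y : ℝ} (hay : a < y) (ha : g a = a) (hle : ∀ z ∈ Icc a y, z ≤ g z) :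
    SatisfiesStar g (Ioo a y) a := by
  rw [SatisfiesStar, closure_Ioo hay.ne]
  refine ⟨left_mem_Icc.2 hay.le, Ioo_subset_image_Ioo hg hsurj ha (hle y ⟨hay.le, le_rfl⟩),
    fun z hz => ?_⟩
  have hgz := hle z hz
  rw [abs_of_nonneg (sub_nonneg.2 hz.1), abs_of_nonneg (by linarith [hz.1])]
  linarith

/-- For a strictly increasing homeomorphism `f` of the real line with at least one fixed
point, there is a fixed point `z₀`, a nonempty open set `U`, and `g` equal to `f` or `f⁻¹`
such that `z₀ ∈ closure U`, `U ⊆ g(U)`, and `|g z − z₀| ≥ |z − z₀|` for all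
`z ∈ closure U` (condition (*) of the paper). -/
theorem exists_point_satisfying_star_on_line (f : ℝ ≃ₜ ℝ) (hf : StrictMono f)
    (hfix : ∃ x : ℝ, f x = x) :
    ∃ (z₀ : ℝ) (U : Set ℝ) (g : ℝ → ℝ),
      (g = ⇑f ∨ g = ⇑f.symm) ∧
      f z₀ = z₀ ∧
      IsOpen U ∧ U.Nonempty ∧
      z₀ ∈ closure U ∧
      U ⊆ g '' U ∧
      ∀ z ∈ closure U, |g z - z₀| ≥ |z - z₀| := by
  obtain ⟨x₀, hx₀⟩ := hfix
  obtain ⟨a, y, hay, ha, hsign⟩ := exists_eq_zero_and_nonneg_or_nonpos_on_Icc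
    (f.continuous.sub continuous_id) (sub_eq_zero.2 hx₀)
  have hfa : f a = a := sub_eq_zero.1 ha
  suffices ∃ g : ℝ → ℝ, (g = ⇑f ∨ g = ⇑f.symm) ∧ SatisfiesStar g (Ioo a y) a from
    let ⟨g, hg, hstar⟩ := this
    ⟨a, Ioo a y, g, hg, hfa, isOpen_Ioo, nonempty_Ioo.2 hay, hstar⟩
  rcases hsign with hnonneg | hnonpos
  · exact ⟨f, Or.inl rfl, satisfiesStar_Ioo hf.monotone f.surjective hay hfa
      fun z hz => sub_nonneg.1 (hnonneg z hz)⟩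
  · have hf_symm_mono : Monotone f.symm := fun u v huv => by
      rwa [← hf.le_iff_le, f.apply_symm_apply, f.apply_symm_apply]
    refine ⟨f.symm, Or.inr rfl, satisfiesStar_Ioo hf_symm_mono f.symm.surjective hay
      (f.symm_apply_eq.2 hfa.symm) fun z hz => ?_⟩
    rw [← hf.le_iff_le, f.apply_symm_apply]
    exact sub_nonpos.1 (hnonpos z hz)
end

section
/- Let g and h be flows on a topological space X satisfying the horocycle commutation relation, and let M ⊆ X satisfy h^s(M) = M for every s ∈ ℝ. Define L = ⋂_{t₀∈ℝ} closure(⋃_{t≥t₀} g^t(M)). Then h^s(L) = L for every s ∈ ℝ. -/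
open Set

theorem Homeomorph.image_iInter_closure_biUnion_Ici_eq {X ι : Type*} [TopologicalSpace X]
    [Preorder ι] (φ : X ≃ₜ X) {A : ι → Set X} (hA : ∀ t, φ '' A t = A t) :
    φ '' ⋂ t₀, closure (⋃ t ∈ Ici t₀, A t) = ⋂ t₀, closure (⋃ t ∈ Ici t₀, A t) := by
  simp only [image_iInter φ.bijective, φ.image_closure, image_iUnion₂, hA]

section Horocycle

variable {X : Type*} [TopologicalSpace X] {g h : Flow ℝ X}

theorem horocycle_apply_flow_eq
    (hcomm : ∀ (t s : ℝ) (x : X), g t (h s x) = h (s * Real.exp (-t)) (g t x))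
    (s t : ℝ) (x : X) : h s (g t x) = g t (h (s * Real.exp t) x) := by
  rw [hcomm, mul_assoc, ← Real.exp_add, add_neg_cancel, Real.exp_zero, mul_one]

theorem horocycle_image_flow_image_eq
    (hcomm : ∀ (t s : ℝ) (x : X), g t (h s x) = h (s * Real.exp (-t)) (g t x))
    {M : Set X} (hM : ∀ s : ℝ, h s '' M = M) (s t : ℝ) : h s '' (g t '' M) = g t '' M := by
  calc h s '' (g t '' M) = g t '' (h (s * Real.exp t) '' M) := by
        simp only [image_image, horocycle_apply_flow_eq hcomm]
    _ = g t '' M := by rw [hM]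

end Horocycle

/-- If the flows `g` and `h` satisfy the horocycle commutation relation
`g^t ∘ h^s = h^{s·e^{−t}} ∘ g^t` and `M` is `h`-invariant, then the set
`L = ⋂_{t₀∈ℝ} closure (⋃_{t ≥ t₀} g^t(M))` is invariant under `h^s` for every `s`. -/
theorem horocycle_image_iInter_closure_iUnion {X : Type*} [TopologicalSpace X]
    (g h : Flow ℝ X)
    (hcomm : ∀ (t s : ℝ) (x : X), g t (h s x) = h (s * Real.exp (-t)) (g t x))
    (M : Set X) (hM : ∀ s : ℝ, h s '' M = M) :
    ∀ s : ℝ,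
      h s '' (⋂ t₀ : ℝ, closure (⋃ t ∈ Set.Ici t₀, g t '' M)) =
        ⋂ t₀ : ℝ, closure (⋃ t ∈ Set.Ici t₀, g t '' M) := fun s =>
  (h.toHomeomorph s).image_iInter_closure_biUnion_Ici_eq
    (horocycle_image_flow_image_eq hcomm hM s)
end

section
/- Let X be a nonempty compact Hausdorff topological space, let g and h be flows on X satisfying the horocycle commutation relation, and assume the joint action of g and h is minimal. Let M ⊆ X be a nonempty set with h^s(M) = M for every s ∈ ℝ. Then ⋂_{t₀∈ℝ} closure(⋃_{t≥t₀} g^t(M)) = X. In particular, ⋃_{t≥0} g^t(M) is dense in X. -/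
/-!
The set `⋂_{t₀} closure (⋃_{t ≥ t₀} g^t(M))` is the ω-limit set of `M` under `g`. It is closed,
nonempty by compactness and `g`-invariant. The commutation relation gives
`h^s ∘ g^t = g^t ∘ h^{s e^t}`, so each `g^t(M)` is `h`-invariant, and by continuity so is the
ω-limit set. Minimality of the joint action then forces it to be all of `X`.
-/

open Filter Set omegaLimit

theorem iInter_closure_biUnion_Ici_image_eq_omegaLimit {τ α β : Type*} [Preorder τ]
    [IsDirectedOrder τ] [Nonempty τ] [TopologicalSpace β] (ϕ : τ → α → β) (s : Set α) :
    ⋂ t₀ : τ, closure (⋃ t ∈ Ici t₀, ϕ t '' s) = ω⁺ ϕ s := by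
  simp only [omegaLimit_def, iUnion_image_left,
    atTop_basis.biInter_mem fun _ _ hst ↦ closure_mono (image2_subset_right hst),
    iInter_true]

theorem mapsTo_omegaLimit_of_mapsTo_image {τ α β : Type*} [TopologicalSpace β] {f : Filter τ}
    {ϕ : τ → α → β} {s : Set α} {ψ : β → β} (hψ : Continuous ψ)
    (hs : ∀ t, MapsTo ψ (ϕ t '' s) (ϕ t '' s)) : MapsTo ψ (ω f ϕ s) (ω f ϕ s) := by
  have himage2 : ∀ u, MapsTo ψ (image2 ϕ u s) (image2 ϕ u s) := by
    rintro u _ ⟨t, ht, x, hx, rfl⟩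
    obtain ⟨y, hy, hψx⟩ := hs t ⟨x, hx, rfl⟩
    exact ⟨t, ht, y, hy, hψx⟩
  simp only [omegaLimit_def]
  exact mapsTo_iInter₂.2 fun u hu ↦ ((himage2 u).closure hψ).mono_left (iInter₂_subset u hu)

section Horocycle

variable {X : Type*} [TopologicalSpace X] {g h : Flow ℝ X}

theorem mapsTo_image_of_horocycle
    (hcomm : ∀ (t s : ℝ) (x : X), g t (h s x) = h (s * Real.exp (-t)) (g t x))
    {M : Set X} (hM : ∀ s, MapsTo (h s) M M) (s t : ℝ) :
    MapsTo (h s) (g t '' M) (g t '' M) := by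
  rintro _ ⟨x, hx, rfl⟩
  have hswap : h s (g t x) = g t (h (s * Real.exp t) x) := by
    rw [hcomm, mul_assoc, ← Real.exp_add, add_neg_cancel, Real.exp_zero, mul_one]
  exact hswap ▸ mem_image_of_mem (g t) (hM _ hx)

theorem isInvariant_omegaLimit_of_horocycle
    (hcomm : ∀ (t s : ℝ) (x : X), g t (h s x) = h (s * Real.exp (-t)) (g t x))
    {M : Set X} (hM : ∀ s, MapsTo (h s) M M) : IsInvariant h (ω⁺ g M) := fun s ↦
  mapsTo_omegaLimit_of_mapsTo_image (h.continuous_toFun s) (mapsTo_image_of_horocycle hcomm hM s)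

end Horocycle

theorem iInter_closure_iUnion_eq_univ_general {X : Type*} [TopologicalSpace X]
    [CompactSpace X]
    (g h : Flow ℝ X)
    (hcomm : ∀ (t s : ℝ) (x : X), g t (h s x) = h (s * Real.exp (-t)) (g t x))
    (hmin : ∀ C : Set X, IsClosed C → C.Nonempty →
      (∀ t : ℝ, g t '' C ⊆ C) → (∀ s : ℝ, h s '' C ⊆ C) → C = Set.univ)
    (M : Set X) (hMne : M.Nonempty) (hM : ∀ s : ℝ, h s '' M = M) :
    (⋂ t₀ : ℝ, closure (⋃ t ∈ Set.Ici t₀, g t '' M)) = Set.univ ∧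
    Dense (⋃ t ∈ Set.Ici (0 : ℝ), g t '' M) := by
  have hg : IsInvariant g (ω⁺ g M) :=
    g.isInvariant_omegaLimit _ _ fun t ↦ tendsto_atTop_add_const_left _ t tendsto_id
  have hh : IsInvariant h (ω⁺ g M) :=
    isInvariant_omegaLimit_of_horocycle hcomm fun s ↦ mapsTo_iff_image_subset.2 (hM s).subset
  have hω : ω⁺ g M = univ :=
    hmin _ (isClosed_omegaLimit _ _ _) (nonempty_omegaLimit _ _ _ hMne)
      ((isInvariant_iff_image _ _).1 hg) ((isInvariant_iff_image _ _).1 hh)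
  refine ⟨(iInter_closure_biUnion_Ici_image_eq_omegaLimit g M).trans hω, ?_⟩
  rw [iUnion_image_left, dense_iff_closure_eq, eq_univ_iff_forall]
  exact fun x ↦ omegaLimit_subset_closure_image2 _ _ _ (Ici_mem_atTop 0) (hω ▸ mem_univ x)

/-- If `X` is a nonempty compact Hausdorff space, the flows `g` and `h` satisfy the
horocycle commutation relation, the joint action of `g` and `h` is minimal, and
`M` is a nonempty `h`-invariant set, then `⋂_{t₀∈ℝ} closure (⋃_{t ≥ t₀} g^t(M)) = X`;
in particular `⋃_{t ≥ 0} g^t(M)` is dense in `X`. -/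
theorem iInter_closure_iUnion_eq_univ {X : Type*} [TopologicalSpace X]
    [CompactSpace X] [T2Space X] [Nonempty X]
    (g h : Flow ℝ X)
    (hcomm : ∀ (t s : ℝ) (x : X), g t (h s x) = h (s * Real.exp (-t)) (g t x))
    (hmin : ∀ C : Set X, IsClosed C → C.Nonempty →
      (∀ t : ℝ, g t '' C ⊆ C) → (∀ s : ℝ, h s '' C ⊆ C) → C = Set.univ)
    (M : Set X) (hMne : M.Nonempty) (hM : ∀ s : ℝ, h s '' M = M) :
    (⋂ t₀ : ℝ, closure (⋃ t ∈ Set.Ici t₀, g t '' M)) = Set.univ ∧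
    Dense (⋃ t ∈ Set.Ici (0 : ℝ), g t '' M) :=
  iInter_closure_iUnion_eq_univ_general g h hcomm hmin M hMne hM
end

section
/- Let X be a nonempty compact Hausdorff topological space, let g and h be flows on X satisfying the horocycle commutation relation, and assume the joint action of g and h is minimal. Let M ⊆ X be a nonempty closed set with h^s(M) = M for every s ∈ ℝ. Suppose there are sets K ⊆ V ⊆ X such that: V has nonempty interior; for every y ∈ V there exists s ∈ ℝ with h^s(y) ∈ K; and for every x ∈ K and every t ≥ 0 one has g^{−t}(x) ∈ V. Then M ∩ V ≠ ∅. -/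
/-!
Let `ω` be the ω-limit set of `M` under `g`. It is closed, nonempty by compactness, and
`g`-invariant; it is also `h`-invariant, because the commutation relation turns `h^s ∘ g^t` into
`g^t ∘ h^{s e^t}` and `M` is `h`-invariant. By minimality `ω = X`, so the forward orbit
`⋃_{t ≥ 0} g^t M` is dense and some `g^t m` lies in the interior of `V`. Pushing it into `K` with
`h^s` gives `g^t m' ∈ K` with `m' = h^{s e^t} m ∈ M`, and then `m' = g^{-t} (g^t m') ∈ V`.
-/

open Set Filter

namespace Flow

variable {X : Type*} [TopologicalSpace X] {g h : Flow ℝ X}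

lemma apply_apply_eq_of_horocycle
    (hcomm : ∀ (t s : ℝ) (x : X), g t (h s x) = h (s * Real.exp (-t)) (g t x))
    (s t : ℝ) (x : X) : h s (g t x) = g t (h (s * Real.exp t) x) := by
  rw [hcomm, mul_assoc, ← Real.exp_add, add_neg_cancel, Real.exp_zero, mul_one]

lemma neg_apply_apply (ϕ : Flow ℝ X) (t : ℝ) (x : X) : ϕ (-t) (ϕ t x) = x := by
  rw [← ϕ.map_add, neg_add_cancel, ϕ.map_zero_apply]

lemma isInvariant_image2_of_horocycle
    (hcomm : ∀ (t s : ℝ) (x : X), g t (h s x) = h (s * Real.exp (-t)) (g t x))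
    {M : Set X} (hM : IsInvariant h M) (u : Set ℝ) : IsInvariant h (image2 g u M) := by
  rintro s _ ⟨t, ht, m, hm, rfl⟩
  rw [apply_apply_eq_of_horocycle hcomm]
  exact mem_image2_of_mem ht (hM _ hm)

lemma isInvariant_omegaLimit_of_horocycle
    (hcomm : ∀ (t s : ℝ) (x : X), g t (h s x) = h (s * Real.exp (-t)) (g t x))
    {M : Set X} (hM : IsInvariant h M) (f : Filter ℝ) : IsInvariant h (omegaLimit f g M) :=
  fun s => mapsTo_iInter₂_iInter₂ fun u _ =>
    (isInvariant_image2_of_horocycle hcomm hM u s).closure (h.continuous_toFun s)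

lemma dense_image2_Ici_of_minimal [CompactSpace X]
    (hcomm : ∀ (t s : ℝ) (x : X), g t (h s x) = h (s * Real.exp (-t)) (g t x))
    (hmin : ∀ C : Set X, IsClosed C → C.Nonempty →
      (∀ t : ℝ, g t '' C ⊆ C) → (∀ s : ℝ, h s '' C ⊆ C) → C = univ)
    {M : Set X} (hMne : M.Nonempty) (hM : IsInvariant h M) :
    Dense (image2 g (Ici 0) M) := by
  have hω : omegaLimit atTop g M = univ :=
    hmin _ (isClosed_omegaLimit _ _ _) (nonempty_omegaLimit atTop g M hMne)
      ((isInvariant_iff_image _ _).mp <| g.isInvariant_omegaLimit atTop M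
        fun t => tendsto_atTop_add_const_left _ t tendsto_id)
      ((isInvariant_iff_image _ _).mp <| isInvariant_omegaLimit_of_horocycle hcomm hM atTop)
  rw [dense_iff_closure_eq, ← univ_subset_iff, ← hω]
  exact omegaLimit_subset_closure_image2 _ _ _ (Ici_mem_atTop 0)

end Flow

theorem minimal_set_meets_flow_box_general {X : Type*} [TopologicalSpace X]
    [CompactSpace X]
    (g h : Flow ℝ X)
    (hcomm : ∀ (t s : ℝ) (x : X), g t (h s x) = h (s * Real.exp (-t)) (g t x))
    (hmin : ∀ C : Set X, IsClosed C → C.Nonempty →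
      (∀ t : ℝ, g t '' C ⊆ C) → (∀ s : ℝ, h s '' C ⊆ C) → C = Set.univ)
    (M : Set X) (hMne : M.Nonempty) (hM : ∀ s : ℝ, h s '' M = M)
    (K V : Set X) (hVint : (interior V).Nonempty)
    (hhit : ∀ y ∈ V, ∃ s : ℝ, h s y ∈ K)
    (hback : ∀ x ∈ K, ∀ t : ℝ, 0 ≤ t → g (-t) x ∈ V) :
    (M ∩ V).Nonempty := by
  have hMinv : IsInvariant h M := (Flow.isInvariant_iff_image_eq h M).mpr hM
  obtain ⟨_, ⟨t, ht, m, hm, rfl⟩, hmV⟩ :=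
    (Flow.dense_image2_Ici_of_minimal hcomm hmin hMne hMinv).exists_mem_open isOpen_interior hVint
  obtain ⟨s, hsK⟩ := hhit _ (interior_subset hmV)
  rw [Flow.apply_apply_eq_of_horocycle hcomm] at hsK
  refine ⟨_, hMinv (s * Real.exp t) hm, ?_⟩
  simpa only [Flow.neg_apply_apply] using hback _ hsK t ht

/-- The core dynamical argument of Theorem 1.2: if `X` is a nonempty compact Hausdorff
space, `g` and `h` are flows satisfying the horocycle commutation relation whose joint
action is minimal, `M` is a nonempty closed `h`-invariant set, and `K ⊆ V ⊆ X` are such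
that `V` has nonempty interior, every point of `V` can be moved into `K` by the flow `h`,
and `g^{−t}(K) ⊆ V` for all `t ≥ 0`, then `M` meets `V`. -/
theorem minimal_set_meets_flow_box {X : Type*} [TopologicalSpace X]
    [CompactSpace X] [T2Space X] [Nonempty X]
    (g h : Flow ℝ X)
    (hcomm : ∀ (t s : ℝ) (x : X), g t (h s x) = h (s * Real.exp (-t)) (g t x))
    (hmin : ∀ C : Set X, IsClosed C → C.Nonempty →
      (∀ t : ℝ, g t '' C ⊆ C) → (∀ s : ℝ, h s '' C ⊆ C) → C = Set.univ)
    (M : Set X) (hMne : M.Nonempty) (hMcl : IsClosed M) (hM : ∀ s : ℝ, h s '' M = M)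
    (K V : Set X) (hKV : K ⊆ V) (hVint : (interior V).Nonempty)
    (hhit : ∀ y ∈ V, ∃ s : ℝ, h s y ∈ K)
    (hback : ∀ x ∈ K, ∀ t : ℝ, 0 ≤ t → g (-t) x ∈ V) :
    (M ∩ V).Nonempty :=
  minimal_set_meets_flow_box_general g h hcomm hmin M hMne hM K V hVint hhit hback
end

section
/- Let G be an abelian subgroup of SL(2,ℝ), acting on the upper half-plane ℍ = { z ∈ ℂ : Im z > 0 } by Möbius transformations. Then the action of G on ℍ is not cocompact: there is no compact set C ⊆ ℍ such that ⋃_{g ∈ G} g·C = ℍ. -/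
/-!
A real symmetric matrix `A` gives the function `z ↦ (z̄, 1) A (z, 1)ᵀ / Im z` on `ℍ`, on which
`h ∈ SL(2,ℝ)` acts through `A ↦ hᵀ A h`. For `A ≠ 0` this function is unbounded: along a vertical
line over a real point where the form does not vanish it blows up like `1 / Im z`.
If some `g ∈ G` is not `±1`, the symmetric matrix `J g - gᵀ J`, with `J = !![0, 1; -1, 0]`, is
nonzero and is fixed by every `h` commuting with `g`, because `hᵀ J h = det h • J`; if `G ⊆ {±1}`,
every `A` is fixed. Either way `ℍ` carries a continuous, unbounded, `G`-invariant function, whereas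
such a function would be bounded by its maximum on a compact set meeting every orbit.
-/

open Matrix Set Filter Topology Bornology
open scoped MatrixGroups UpperHalfPlane

section BinaryForms

def sympJ (R : Type*) [CommRing R] : Matrix (Fin 2) (Fin 2) R := !![0, 1; -1, 0]

variable {R : Type*} [CommRing R]

lemma transpose_mul_sympJ_mul (M : Matrix (Fin 2) (Fin 2) R) :
    Mᵀ * sympJ R * M = M.det • sympJ R := by
  ext i j
  fin_cases i <;> fin_cases j <;>
    simp [sympJ, det_fin_two, Matrix.mul_apply, Fin.sum_univ_two] <;> ring

def invariantForm (M : Matrix (Fin 2) (Fin 2) R) : Matrix (Fin 2) (Fin 2) R :=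
  sympJ R * M - Mᵀ * sympJ R

lemma invariantForm_eq (M : Matrix (Fin 2) (Fin 2) R) :
    invariantForm M = !![2 * M 1 0, M 1 1 - M 0 0; M 1 1 - M 0 0, -2 * M 0 1] := by
  ext i j
  fin_cases i <;> fin_cases j <;>
    simp [invariantForm, sympJ, Matrix.mul_apply, Fin.sum_univ_two, vecMul, dotProduct] <;> ring

lemma invariantForm_isSymm (M : Matrix (Fin 2) (Fin 2) R) : (invariantForm M).IsSymm := by
  rw [invariantForm_eq]
  ext i j
  fin_cases i <;> fin_cases j <;> rfl

lemma transpose_mul_invariantForm_mul {M N : Matrix (Fin 2) (Fin 2) R} (hMN : Commute M N)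
    (hN : N.det = 1) : Nᵀ * invariantForm M * N = invariantForm M := by
  have hJ : Nᵀ * sympJ R * N = sympJ R := by rw [transpose_mul_sympJ_mul, hN, one_smul]
  calc Nᵀ * invariantForm M * N
      = (Nᵀ * sympJ R * N) * M - Mᵀ * (Nᵀ * sympJ R * N) := by
        simp only [invariantForm, Matrix.mul_sub, Matrix.sub_mul, Matrix.mul_assoc, hMN.eq]
        simp only [← Matrix.mul_assoc, ← transpose_mul, hMN.eq]
    _ = invariantForm M := by rw [hJ, invariantForm]

end BinaryForms

lemma invariantForm_ne_zero {g : SL(2, ℝ)} (h1 : g ≠ 1) (hm1 : g ≠ -1) :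
    invariantForm (g : Matrix (Fin 2) (Fin 2) ℝ) ≠ 0 := by
  intro h0
  rw [invariantForm_eq] at h0
  have e := fun i j => congrFun (congrFun h0 i) j
  have hc : g 1 0 = 0 := by simpa using e 0 0
  have hb : g 0 1 = 0 := by simpa using e 1 1
  have hd : g 1 1 = g 0 0 := by simpa [sub_eq_zero] using e 0 1
  have hdet : g 0 0 * g 0 0 = 1 := by
    have := g.2
    rw [det_fin_two, hb, hd] at this
    simpa using this
  rcases mul_self_eq_one_iff.mp hdet with ha | ha
  · exact h1 (Matrix.SpecialLinearGroup.ext _ _ fun i j => by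
      fin_cases i <;> fin_cases j <;> simp [ha, hb, hc, hd])
  · exact hm1 (Matrix.SpecialLinearGroup.ext _ _ fun i j => by
      fin_cases i <;> fin_cases j <;> simp [ha, hb, hc, hd])

lemma exists_invariantForm_of_commute {G : Set SL(2, ℝ)} (hG : ∀ a ∈ G, ∀ b ∈ G, Commute a b) :
    ∃ A : Matrix (Fin 2) (Fin 2) ℝ,
      A.IsSymm ∧ A ≠ 0 ∧ ∀ h ∈ G, (h : Matrix (Fin 2) (Fin 2) ℝ)ᵀ * A * h = A := by
  by_cases hnontriv : ∃ g ∈ G, g ≠ 1 ∧ g ≠ -1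
  · obtain ⟨g, hg, h1, hm1⟩ := hnontriv
    refine ⟨invariantForm g, invariantForm_isSymm _, invariantForm_ne_zero h1 hm1,
      fun h hh => transpose_mul_invariantForm_mul ?_ h.2⟩
    exact (hG g hg h hh).map Matrix.SpecialLinearGroup.coeMonoidHom
  · push Not at hnontriv
    refine ⟨1, isSymm_one, one_ne_zero, fun h hh => ?_⟩
    rcases eq_or_ne h 1 with rfl | h1
    · simp
    · rw [hnontriv h hh h1]
      simp

namespace UpperHalfPlane

noncomputable def quadFormDivIm (A : Matrix (Fin 2) (Fin 2) ℝ) (z : ℍ) : ℝ :=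
  (A 0 0 * Complex.normSq z + (A 0 1 + A 1 0) * z.re + A 1 1) / z.im

lemma continuous_quadFormDivIm (A : Matrix (Fin 2) (Fin 2) ℝ) :
    Continuous (quadFormDivIm A) := by
  have := continuous_coe
  have := continuous_re
  exact Continuous.div (by fun_prop) continuous_im fun z => z.im_pos.ne'

lemma smul_mul_normSq_denom (h : SL(2, ℝ)) (z : ℍ) :
    let D := Complex.normSq (h 1 0 * z + h 1 1)
    D ≠ 0 ∧
    Complex.normSq (h • z : ℍ) * D = Complex.normSq (h 0 0 * z + h 0 1) ∧
    (h • z).re * D = (h 0 0 * z.re + h 0 1) * (h 1 0 * z.re + h 1 1) + h 0 0 * h 1 0 * z.im ^ 2 ∧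
    (h • z).im * D = z.im := by
  intro D
  have hdet : h 0 0 * h 1 1 - h 0 1 * h 1 0 = 1 := by rw [← det_fin_two]; exact h.2
  have hc := coe_specialLinearGroup_apply h z
  simp only [Algebra.algebraMap_self, RingHom.id_apply] at hc
  have hD0 : D ≠ 0 := (normSq_denom_pos (h : GL (Fin 2) ℝ) z.im_pos.ne').ne'
  refine ⟨hD0, ?_, ?_, ?_⟩
  · rw [hc, Complex.normSq_div, div_mul_cancel₀ _ hD0]
  · rw [← coe_re, hc, Complex.div_re, ← add_div, div_mul_cancel₀ _ hD0]
    simp only [Complex.add_re, Complex.add_im, Complex.mul_re, Complex.mul_im, Complex.ofReal_re,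
      Complex.ofReal_im, coe_re, coe_im]
    ring
  · rw [← coe_im, hc, Complex.div_im, ← sub_div, div_mul_cancel₀ _ hD0]
    simp only [Complex.add_re, Complex.add_im, Complex.mul_re, Complex.mul_im, Complex.ofReal_re,
      Complex.ofReal_im, coe_re, coe_im]
    linear_combination z.im * hdet

lemma quadFormDivIm_smul (A : Matrix (Fin 2) (Fin 2) ℝ) (h : SL(2, ℝ)) (z : ℍ) :
    quadFormDivIm A (h • z) = quadFormDivIm ((h : Matrix (Fin 2) (Fin 2) ℝ)ᵀ * A * h) z := by
  obtain ⟨hD, hnorm, hre, him⟩ := smul_mul_normSq_denom h z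
  unfold quadFormDivIm
  rw [← mul_div_mul_right _ _ hD, him, add_mul, add_mul, mul_assoc, mul_assoc, hnorm, hre]
  congr 1
  simp only [Complex.normSq_apply, Complex.add_re, Complex.add_im, Complex.mul_re,
    Complex.mul_im, Complex.ofReal_re, Complex.ofReal_im, coe_re, coe_im, Matrix.mul_apply,
    transpose_apply, Fin.sum_univ_two]
  ring

lemma exists_quadForm_ne_zero {A : Matrix (Fin 2) (Fin 2) ℝ} (hA : A.IsSymm) (hA0 : A ≠ 0) :
    ∃ x : ℝ, A 0 0 * x ^ 2 + (A 0 1 + A 1 0) * x + A 1 1 ≠ 0 := by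
  by_contra! h
  have h0 := h 0
  have h1 := h 1
  have hm1 := h (-1)
  have h10 : A 1 0 = A 0 1 := hA.apply 0 1
  refine hA0 (Matrix.ext fun i j => ?_)
  fin_cases i <;> fin_cases j <;>
    simp only [Fin.zero_eta, Fin.mk_one, Fin.isValue, Matrix.zero_apply] <;> linarith

lemma not_isBounded_range_quadFormDivIm {A : Matrix (Fin 2) (Fin 2) ℝ} (hA : A.IsSymm)
    (hA0 : A ≠ 0) : ¬ IsBounded (range (quadFormDivIm A)) := by
  obtain ⟨x, hx⟩ := exists_quadForm_ne_zero hA hA0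
  set P := A 0 0 * x ^ 2 + (A 0 1 + A 1 0) * x + A 1 1
  rw [isBounded_iff_forall_norm_le]
  rintro ⟨M, hM⟩
  have hbound : ∀ y : ℝ, 0 < y → |P + A 0 0 * y ^ 2| - M * y ≤ 0 := by
    intro y hy
    have hval : quadFormDivIm A (mk ⟨x, y⟩ hy) * y = P + A 0 0 * y ^ 2 := by
      simp only [quadFormDivIm, Complex.normSq_apply, mk_re, mk_im, div_mul_cancel₀ _ hy.ne', P]
      ring
    rw [sub_nonpos, ← hval, abs_mul, abs_of_pos hy]
    exact mul_le_mul_of_nonneg_right (hM _ (mem_range_self _)) hy.le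
  have hlim : Tendsto (fun y : ℝ => |P + A 0 0 * y ^ 2| - M * y) (𝓝[>] 0) (𝓝 |P|) := by
    have : Continuous fun y : ℝ => |P + A 0 0 * y ^ 2| - M * y := by fun_prop
    simpa using (this.tendsto 0).mono_left nhdsWithin_le_nhds
  exact hx (abs_nonpos_iff.mp (le_of_tendsto hlim (eventually_nhdsWithin_of_forall hbound)))

end UpperHalfPlane

lemma isBounded_range_of_iUnion_smul_eq_univ {M X : Type*} [SMul M X] [TopologicalSpace X]
    {G : Set M} {C : Set X} (hC : IsCompact C) (hcover : ⋃ g ∈ G, (g • ·) '' C = univ)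
    {f : X → ℝ} (hf : Continuous f) (hinv : ∀ g ∈ G, ∀ x, f (g • x) = f x) :
    IsBounded (range f) := by
  refine (hC.image hf).isBounded.subset ?_
  rintro _ ⟨x, rfl⟩
  obtain ⟨g, hg, c, hc, rfl⟩ : ∃ g ∈ G, ∃ c ∈ C, g • c = x := by
    simpa using (hcover ▸ mem_univ x : x ∈ ⋃ g ∈ G, (g • ·) '' C)
  exact ⟨c, hc, (hinv g hg c).symm⟩

/-- An abelian subgroup `G` of `SL(2,ℝ)`, acting on the upper half-plane `ℍ` by Möbius
transformations, cannot act cocompactly: no compact set `C ⊆ ℍ` has `⋃_{g ∈ G} g·C = ℍ`. -/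
theorem abelian_subgroup_not_cocompact (G : Subgroup (Matrix.SpecialLinearGroup (Fin 2) ℝ))
    (hab : ∀ a b : G, a * b = b * a) :
    ¬ ∃ C : Set UpperHalfPlane,
        IsCompact C ∧
        (⋃ g ∈ G, (fun z : UpperHalfPlane =>
          (g : Matrix.SpecialLinearGroup (Fin 2) ℝ) • z) '' C) = Set.univ := by
  rintro ⟨C, hC, hcover⟩
  obtain ⟨A, hA, hA0, hAinv⟩ := exists_invariantForm_of_commute (G := (G : Set SL(2, ℝ)))
    fun a ha b hb => congrArg Subtype.val (hab ⟨a, ha⟩ ⟨b, hb⟩)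
  refine UpperHalfPlane.not_isBounded_range_quadFormDivIm hA hA0
    (isBounded_range_of_iUnion_smul_eq_univ hC hcover
      (UpperHalfPlane.continuous_quadFormDivIm A) fun g hg z => ?_)
  rw [UpperHalfPlane.quadFormDivIm_smul, hAinv g hg]
end
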